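/- arXiv:2604.02513 — 9 statements merged into one kernel-verified Lean document; each statement's English description precedes it below -/
import Mathlib

section
/- For every γ ∈ ℝ^M with strictly positive entries, every y ∈ ℝ^N, and every x ∈ ℝ^M, one has (1/σ²)·‖y − Φx‖² + Σ_{i=1}^M x[i]²/γ[i] ≥ yᵀ Σ(γ)⁻¹ y, with equality when x = Γ Φᵀ Σ(γ)⁻¹ y (the SBL conditional mean). In particular, yᵀ Σ(γ)⁻¹ y equals the minimum over x ∈ ℝ^M of (1/σ²)·‖y − Φx‖² + Σ_{i=1}^M x[i]²/γ[i]. -/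
open Matrix Finset Real

noncomputable def Sig {N M : ℕ} (Φ : Matrix (Fin N) (Fin M) ℝ) (σ2 : ℝ)
    (γ : Fin M → ℝ) : Matrix (Fin N) (Fin N) ℝ :=
  Φ * Matrix.diagonal γ * Φᵀ + σ2 • (1 : Matrix (Fin N) (Fin N) ℝ)

noncomputable def T1 {N M L : ℕ} (Φ : Matrix (Fin N) (Fin M) ℝ) (σ2 : ℝ)
    (y : Fin L → Fin N → ℝ) (γ : Fin M → ℝ) (i : Fin M) : ℝ :=
  (1 / (L : ℝ)) * ∑ l, ((fun n => Φ n i) ⬝ᵥ (Sig Φ σ2 γ)⁻¹ *ᵥ y l) ^ 2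

noncomputable def T2 {N M : ℕ} (Φ : Matrix (Fin N) (Fin M) ℝ) (σ2 : ℝ)
    (γ : Fin M → ℝ) (i : Fin M) : ℝ :=
  (fun n => Φ n i) ⬝ᵥ (Sig Φ σ2 γ)⁻¹ *ᵥ (fun n => Φ n i)

noncomputable def fSBL {N M L : ℕ} (Φ : Matrix (Fin N) (Fin M) ℝ) (σ2 : ℝ)
    (y : Fin L → Fin N → ℝ) (γ : Fin M → ℝ) : ℝ :=
  Real.log (Sig Φ σ2 γ).det + (1 / (L : ℝ)) * ∑ l, y l ⬝ᵥ (Sig Φ σ2 γ)⁻¹ *ᵥ y l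

/-- For every entrywise positive γ, every y and x,
(1/σ²)‖y − Φx‖² + Σᵢ x[i]²/γ[i] ≥ yᵀ Σ(γ)⁻¹ y, with equality at the
SBL conditional mean x̂ = Γ Φᵀ Σ(γ)⁻¹ y; hence yᵀ Σ(γ)⁻¹ y is the minimum. -/
theorem stmt0 {N M : ℕ} (Φ : Matrix (Fin N) (Fin M) ℝ) (σ2 : ℝ) (hσ : 0 < σ2)
    (γ : Fin M → ℝ) (hγ : ∀ i, 0 < γ i) (y : Fin N → ℝ) :
    (∀ x : Fin M → ℝ,
      y ⬝ᵥ (Sig Φ σ2 γ)⁻¹ *ᵥ y ≤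
        (1 / σ2) * (∑ n, (y n - (Φ *ᵥ x) n) ^ 2) + ∑ i, (x i) ^ 2 / γ i) ∧
    ((1 / σ2) * (∑ n, (y n - (Φ *ᵥ ((Matrix.diagonal γ * Φᵀ * (Sig Φ σ2 γ)⁻¹) *ᵥ y)) n) ^ 2)
        + ∑ i, (((Matrix.diagonal γ * Φᵀ * (Sig Φ σ2 γ)⁻¹) *ᵥ y) i) ^ 2 / γ i
      = y ⬝ᵥ (Sig Φ σ2 γ)⁻¹ *ᵥ y) ∧
    IsLeast
      (Set.range (fun x : Fin M → ℝ =>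
        (1 / σ2) * (∑ n, (y n - (Φ *ᵥ x) n) ^ 2) + ∑ i, (x i) ^ 2 / γ i))
      (y ⬝ᵥ (Sig Φ σ2 γ)⁻¹ *ᵥ y) := by
  classical
  set A := Sig Φ σ2 γ with hAdef
  -- A is positive definite
  have hApd : A.PosDef := by
    have hD : (Matrix.diagonal γ).PosSemidef :=
      Matrix.posSemidef_diagonal_iff.mpr fun i => (hγ i).le
    have h1 : (Φ * Matrix.diagonal γ * Φᵀ).PosSemidef := by
      simpa using hD.mul_mul_conjTranspose_same Φ
    have h2 : (σ2 • (1 : Matrix (Fin N) (Fin N) ℝ)).PosDef := by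
      rw [smul_one_eq_diagonal]
      exact Matrix.posDef_diagonal_iff.mpr fun _ => hσ
    have := h2.add_posSemidef h1
    simpa [hAdef, Sig, add_comm] using this
  have hdet : IsUnit A.det := isUnit_iff_ne_zero.mpr (ne_of_gt hApd.det_pos)
  set u : Fin N → ℝ := A⁻¹ *ᵥ y with hu
  have hAu : A *ᵥ u = y := by
    rw [hu, Matrix.mulVec_mulVec, Matrix.mul_nonsing_inv A hdet, Matrix.one_mulVec]
  set v : Fin M → ℝ := Φᵀ *ᵥ u with hv
  set xh : Fin M → ℝ := fun i => γ i * v i with hxh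
  -- the statement's x̂ equals ours
  have hxh' : (Matrix.diagonal γ * Φᵀ * A⁻¹) *ᵥ y = xh := by
    funext i
    rw [← Matrix.mulVec_mulVec, ← Matrix.mulVec_mulVec, ← hu, ← hv]
    exact Matrix.mulVec_diagonal γ v i
  -- key: Φ *ᵥ xh = y - σ2 • u
  have hkey : ∀ n, (Φ *ᵥ xh) n = y n - σ2 * u n := by
    intro n
    have h1 : (Φ * Matrix.diagonal γ * Φᵀ) *ᵥ u + σ2 • u = y := by
      have := hAu
      rw [hAdef, Sig, Matrix.add_mulVec, Matrix.smul_mulVec, Matrix.one_mulVec] at this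
      exact this
    have h2 : (Φ * Matrix.diagonal γ * Φᵀ) *ᵥ u = Φ *ᵥ xh := by
      rw [← Matrix.mulVec_mulVec, ← Matrix.mulVec_mulVec, ← hv]
      have hdiag : Matrix.diagonal γ *ᵥ v = xh := funext fun i => Matrix.mulVec_diagonal γ v i
      rw [hdiag]
    have := congrFun h1 n
    rw [h2] at this
    simp only [Pi.add_apply, Pi.smul_apply, smul_eq_mul] at this
    linarith
  -- dot products
  have hdot : ∀ e : Fin M → ℝ, ∑ n, u n * (Φ *ᵥ e) n = ∑ i, v i * e i := by
    intro e
    have : u ⬝ᵥ (Φ *ᵥ e) = (u ᵥ* Φ) ⬝ᵥ e := Matrix.dotProduct_mulVec u Φ e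
    rw [← Matrix.mulVec_transpose, ← hv] at this
    simpa [dotProduct] using this
  have hyu : y ⬝ᵥ (A⁻¹ *ᵥ y) = ∑ i, γ i * v i * v i + σ2 * ∑ n, u n * u n := by
    rw [← hu]
    have h1 : y ⬝ᵥ u = ∑ n, ((Φ *ᵥ xh) n + σ2 * u n) * u n := by
      simp only [dotProduct]
      refine Finset.sum_congr rfl fun n _ => ?_
      rw [hkey n]; ring
    rw [h1]
    have h2 : ∑ n, ((Φ *ᵥ xh) n + σ2 * u n) * u n
        = ∑ n, u n * (Φ *ᵥ xh) n + σ2 * ∑ n, u n * u n := by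
      rw [Finset.mul_sum, ← Finset.sum_add_distrib]
      exact Finset.sum_congr rfl fun n _ => by ring
    rw [h2, hdot xh]
    congr 1
    exact Finset.sum_congr rfl fun i _ => by rw [hxh]; ring
  -- master identity
  have master : ∀ x : Fin M → ℝ,
      (1 / σ2) * (∑ n, (y n - (Φ *ᵥ x) n) ^ 2) + ∑ i, (x i) ^ 2 / γ i
      = y ⬝ᵥ (A⁻¹ *ᵥ y) + (1 / σ2) * ∑ n, ((Φ *ᵥ (x - xh)) n) ^ 2
        + ∑ i, (x i - xh i) ^ 2 / γ i := by
    intro x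
    have hsq : ∀ n, (y n - (Φ *ᵥ x) n) ^ 2
        = σ2 ^ 2 * u n ^ 2 - 2 * σ2 * (u n * (Φ *ᵥ (x - xh)) n) + ((Φ *ᵥ (x - xh)) n) ^ 2 := by
      intro n
      have h1 : (Φ *ᵥ (x - xh)) n = (Φ *ᵥ x) n - (Φ *ᵥ xh) n := by
        rw [Matrix.mulVec_sub]; rfl
      have h2 := hkey n
      rw [h1, h2]; ring
    have hx2 : ∀ i, (x i) ^ 2 / γ i
        = γ i * v i * v i + 2 * (v i * (x i - xh i)) + (x i - xh i) ^ 2 / γ i := by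
      intro i
      have hne : γ i ≠ 0 := (hγ i).ne'
      rw [hxh]
      field_simp
      ring
    calc (1 / σ2) * (∑ n, (y n - (Φ *ᵥ x) n) ^ 2) + ∑ i, (x i) ^ 2 / γ i
        = (1 / σ2) * (σ2 ^ 2 * ∑ n, u n ^ 2 - 2 * σ2 * ∑ n, u n * (Φ *ᵥ (x - xh)) n
            + ∑ n, ((Φ *ᵥ (x - xh)) n) ^ 2)
          + (∑ i, γ i * v i * v i + 2 * ∑ i, v i * (x i - xh i)
            + ∑ i, (x i - xh i) ^ 2 / γ i) := by
          congr 1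
          · congr 1
            rw [Finset.sum_congr rfl fun n _ => hsq n]
            rw [Finset.sum_add_distrib, Finset.sum_sub_distrib, Finset.mul_sum, Finset.mul_sum]
          · rw [Finset.sum_congr rfl fun i _ => hx2 i]
            rw [Finset.sum_add_distrib, Finset.sum_add_distrib, Finset.mul_sum]
      _ = y ⬝ᵥ (A⁻¹ *ᵥ y) + (1 / σ2) * ∑ n, ((Φ *ᵥ (x - xh)) n) ^ 2
            + ∑ i, (x i - xh i) ^ 2 / γ i := by
          rw [hyu, hdot (x - xh)]
          have hσne : σ2 ≠ 0 := hσ.ne'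
          have huu : ∑ n, u n * u n = ∑ n, u n ^ 2 :=
            Finset.sum_congr rfl fun n _ => (sq (u n)).symm
          rw [← huu]
          field_simp
          simp only [Pi.sub_apply, mul_sub, Finset.sum_sub_distrib]
          ring
  have hnonneg : ∀ x : Fin M → ℝ,
      0 ≤ (1 / σ2) * ∑ n, ((Φ *ᵥ (x - xh)) n) ^ 2 + ∑ i, (x i - xh i) ^ 2 / γ i := by
    intro x
    have h1 : (0:ℝ) ≤ ∑ n, ((Φ *ᵥ (x - xh)) n) ^ 2 :=
      Finset.sum_nonneg fun n _ => sq_nonneg _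
    have h2 : (0:ℝ) ≤ ∑ i, (x i - xh i) ^ 2 / γ i :=
      Finset.sum_nonneg fun i _ => div_nonneg (sq_nonneg _) (hγ i).le
    positivity
  have hineq : ∀ x : Fin M → ℝ,
      y ⬝ᵥ (A⁻¹ *ᵥ y) ≤
        (1 / σ2) * (∑ n, (y n - (Φ *ᵥ x) n) ^ 2) + ∑ i, (x i) ^ 2 / γ i := by
    intro x
    rw [master x]
    have := hnonneg x
    linarith
  have heq : (1 / σ2) * (∑ n, (y n - (Φ *ᵥ xh) n) ^ 2) + ∑ i, (xh i) ^ 2 / γ i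
      = y ⬝ᵥ (A⁻¹ *ᵥ y) := by
    rw [master xh]
    simp
  refine ⟨hineq, ?_, ⟨⟨xh, ?_⟩, ?_⟩⟩
  · rw [hxh']; exact heq
  · exact heq
  · rintro z ⟨x, rfl⟩
    exact hineq x
end

section
/- For all γ, γ̂ ∈ ℝ^M with nonnegative entries, log det Σ(γ) ≤ log det Σ(γ̂) + Σ_{i=1}^M (γ[i] − γ̂[i])·T₂(γ̂)[i]; that is, the affine function of γ on the right-hand side is a supporting hyperplane of the concave function γ ↦ log det Σ(γ) at γ̂, with equality at γ = γ̂. -/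
open Matrix Finset Real

/-- log x ≤ trace bound for a PSD matrix with positive determinant. -/
lemma core {n : ℕ} {C : Matrix (Fin n) (Fin n) ℝ} (hC : C.PosSemidef) (hd : 0 < C.det) :
    Real.log C.det ≤ C.trace - n := by
  have hH := hC.isHermitian
  have hdet : C.det = ∏ i, hH.eigenvalues i := by
    simpa using hH.det_eq_prod_eigenvalues
  have htr : C.trace = ∑ i, hH.eigenvalues i := by
    simpa using hH.trace_eq_sum_eigenvalues
  have hpos : ∀ i, 0 < hH.eigenvalues i := by
    intro i
    rcases lt_or_eq_of_le (hC.eigenvalues_nonneg i) with h | h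
    · exact h
    · exfalso
      rw [hdet] at hd
      exact absurd (Finset.prod_eq_zero (Finset.mem_univ i) h.symm) hd.ne'
  rw [hdet, htr, Real.log_prod (fun i _ => (hpos i).ne')]
  have : ∑ i : Fin n, (1:ℝ) = n := by simp
  rw [← this, ← Finset.sum_sub_distrib]
  exact Finset.sum_le_sum fun i _ => Real.log_le_sub_one_of_pos (hpos i)

open scoped MatrixOrder in
/-- Supporting hyperplane inequality for log det on positive definite matrices. -/
lemma logdet_le {n : ℕ} {A B : Matrix (Fin n) (Fin n) ℝ} (hA : A.PosDef) (hB : B.PosDef) :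
    Real.log A.det ≤ Real.log B.det + (B⁻¹ * (A - B)).trace := by
  set S := CFC.sqrt B with hSdef
  have hS : S.PosSemidef := (CFC.sqrt_nonneg B).posSemidef
  have hSS : S * S = B := CFC.sqrt_mul_sqrt_self B hB.posSemidef.nonneg
  have hdetS : S.det * S.det = B.det := by rw [← Matrix.det_mul, hSS]
  have hdetSnn : (0:ℝ) ≤ S.det := by
    have h1 : S.det = ∏ i, hS.isHermitian.eigenvalues i := by
      simpa using hS.isHermitian.det_eq_prod_eigenvalues
    rw [h1]; exact Finset.prod_nonneg fun i _ => hS.eigenvalues_nonneg i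
  have hdetSpos : 0 < S.det := by
    rcases lt_or_eq_of_le hdetSnn with h | h
    · exact h
    · exfalso; rw [← h] at hdetS; simpa [← hdetS] using hB.det_pos
  have hSinv : S⁻¹.PosSemidef := hS.inv
  set C := S⁻¹ * A * S⁻¹ with hCdef
  have hC : C.PosSemidef := by
    have := hA.posSemidef.mul_mul_conjTranspose_same S⁻¹
    rwa [hSinv.isHermitian.eq] at this
  have hBinv : S⁻¹ * S⁻¹ = B⁻¹ := by rw [← Matrix.mul_inv_rev, hSS]
  have hdetC : C.det = A.det / B.det := by
    rw [hCdef, Matrix.det_mul, Matrix.det_mul, Matrix.det_nonsing_inv, Ring.inverse_eq_inv, ← hdetS]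
    field_simp
  have htrC : C.trace = (B⁻¹ * A).trace := by
    rw [hCdef, Matrix.trace_mul_cycle, hBinv]
  have hdetCpos : 0 < C.det := by rw [hdetC]; exact div_pos hA.det_pos hB.det_pos
  have h := core hC hdetCpos
  rw [hdetC, Real.log_div hA.det_pos.ne' hB.det_pos.ne'] at h
  have hBB : B⁻¹ * B = 1 := Matrix.nonsing_inv_mul B hB.det_pos.ne'.isUnit
  rw [Matrix.mul_sub, Matrix.trace_sub, hBB, Matrix.trace_one]
  simp only [Fintype.card_fin] at *
  linarith [htrC ▸ h]

lemma sig_posDef {N M : ℕ} (Φ : Matrix (Fin N) (Fin M) ℝ) {σ2 : ℝ} (hσ : 0 < σ2)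
    {γ : Fin M → ℝ} (hγ : ∀ i, 0 ≤ γ i) : (Sig Φ σ2 γ).PosDef := by
  have h1 : (Φ * Matrix.diagonal γ * Φᵀ).PosSemidef := by
    have := (Matrix.PosSemidef.diagonal (R := ℝ) (hγ : 0 ≤ γ)).mul_mul_conjTranspose_same Φ
    rwa [Matrix.conjTranspose_eq_transpose_of_trivial] at this
  have h2 : (σ2 • (1 : Matrix (Fin N) (Fin N) ℝ)).PosDef := by
    rw [Matrix.smul_one_eq_diagonal]
    exact Matrix.PosDef.diagonal (fun i => hσ)
  exact Matrix.PosDef.posSemidef_add h1 h2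

lemma sig_sub {N M : ℕ} (Φ : Matrix (Fin N) (Fin M) ℝ) (σ2 : ℝ) (γ γhat : Fin M → ℝ) :
    Sig Φ σ2 γ - Sig Φ σ2 γhat = Φ * Matrix.diagonal (γ - γhat) * Φᵀ := by
  rw [show Matrix.diagonal (γ-γhat) = Matrix.diagonal γ - Matrix.diagonal γhat from
    (Matrix.diagonal_sub γ γhat).symm, Matrix.mul_sub, Matrix.sub_mul, Sig, Sig]
  abel

lemma trace_form {N M : ℕ} (Φ : Matrix (Fin N) (Fin M) ℝ) (X : Matrix (Fin N) (Fin N) ℝ)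
    (d : Fin M → ℝ) :
    (X * (Φ * Matrix.diagonal d * Φᵀ)).trace
      = ∑ i, d i * ((fun n => Φ n i) ⬝ᵥ X *ᵥ (fun n => Φ n i)) := by
  simp only [Matrix.trace, Matrix.diag, Matrix.mul_apply, Matrix.diagonal_apply,
    Matrix.transpose_apply, dotProduct, Matrix.mulVec, Finset.sum_mul, Finset.mul_sum,
    mul_ite, mul_zero, ite_mul, zero_mul, Finset.sum_ite_eq, Finset.sum_ite_eq', Finset.mem_univ, if_true]
  refine Eq.trans (Finset.sum_congr rfl fun x _ => Finset.sum_comm) ?_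
  rw [Finset.sum_comm]
  refine Finset.sum_congr rfl fun i _ => Finset.sum_congr rfl fun n1 _ => Finset.sum_congr rfl fun n _ => by ring

/-- supporting-hyperplane bound for the concave log-det term:
log det Σ(γ) ≤ log det Σ(γ̂) + Σᵢ (γ[i] − γ̂[i])·T₂(γ̂)[i], with equality at γ = γ̂. -/
theorem stmt1 {N M : ℕ} (Φ : Matrix (Fin N) (Fin M) ℝ) (σ2 : ℝ) (hσ : 0 < σ2) :
    (∀ γ γhat : Fin M → ℝ, (∀ i, 0 ≤ γ i) → (∀ i, 0 ≤ γhat i) →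
      Real.log (Sig Φ σ2 γ).det ≤
        Real.log (Sig Φ σ2 γhat).det + ∑ i, (γ i - γhat i) * T2 Φ σ2 γhat i) ∧
    (∀ γhat : Fin M → ℝ, (∀ i, 0 ≤ γhat i) →
      Real.log (Sig Φ σ2 γhat).det =
        Real.log (Sig Φ σ2 γhat).det + ∑ i, (γhat i - γhat i) * T2 Φ σ2 γhat i) := by
  constructor
  · intro γ γhat hγ hγhat
    have hA := sig_posDef Φ hσ hγ
    have hB := sig_posDef Φ hσ hγhat
    have h := logdet_le hA hB
    have heq : ((Sig Φ σ2 γhat)⁻¹ * (Sig Φ σ2 γ - Sig Φ σ2 γhat)).trace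
        = ∑ i, (γ i - γhat i) * T2 Φ σ2 γhat i := by
      rw [sig_sub, trace_form]
      exact Finset.sum_congr rfl fun i _ => by simp [T2]
    rwa [heq] at h
  · intro γhat hγhat
    simp
end

section
/- (p-SBL update decreases the surrogate.) Let γ ∈ ℝ^M have strictly positive entries and suppose T₁(γ)[i] > 0 and T₂(γ)[i] > 0 for every i. For 0 < p ≤ 1 define the p-SBL update γ′ by γ′[i] = (T₁(γ)[i]/T₂(γ)[i])^{p}·γ[i]. Then Σ_{i=1}^M [ T₂(γ)[i]·γ′[i] + γ[i]²·T₁(γ)[i]/γ′[i] ] ≤ Σ_{i=1}^M γ[i]·( T₁(γ)[i] + T₂(γ)[i] ), i.e., g(γ′; γ) ≤ g(γ; γ). Moreover, for p = 1 this inequality holds with equality, and for 0 < p < 1 it is strict whenever T₁(γ)[i] ≠ T₂(γ)[i] for some i. -/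
open Matrix Finset Real

lemma factor_nonneg {r p q : ℝ} (hr : 0 < r) (hp : 0 ≤ p) (hq : 0 ≤ q) :
    0 ≤ (1 - r ^ p) * (1 - r ^ q) := by
  rcases le_total r 1 with h | h
  · exact mul_nonneg (by linarith [Real.rpow_le_one hr.le h hp])
      (by linarith [Real.rpow_le_one hr.le h hq])
  · nlinarith [Real.one_le_rpow h hp, Real.one_le_rpow h hq]

lemma factor_pos {r p q : ℝ} (hr : 0 < r) (hr1 : r ≠ 1) (hp : 0 < p) (hq : 0 < q) :
    0 < (1 - r ^ p) * (1 - r ^ q) := by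
  rcases lt_or_gt_of_ne hr1 with h | h
  · exact mul_pos (by linarith [Real.rpow_lt_one hr.le h hp])
      (by linarith [Real.rpow_lt_one hr.le h hq])
  · exact mul_pos_of_neg_of_neg (by linarith [Real.one_lt_rpow h hp])
      (by linarith [Real.one_lt_rpow h hq])

lemma term_identity {a b g p : ℝ} (ha : 0 < a) (hb : 0 < b) (hg : 0 < g) :
    g * (a + b) - (b * ((a / b) ^ p * g) + g ^ 2 * a / ((a / b) ^ p * g)) =
      g * b * ((1 - (a / b) ^ p) * (1 - (a / b) ^ (1 - p))) := by
  set r := a / b with hrdef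
  have hr : 0 < r := div_pos ha hb
  have hs : 0 < r ^ p := Real.rpow_pos_of_pos hr p
  have hmul : r ^ (1 - p) * r ^ p = r := by
    rw [← Real.rpow_add hr]; norm_num
  have harb : a = r * b := by rw [hrdef]; field_simp
  rw [harb]
  field_simp
  linear_combination (1 - r ^ p) * hmul

/-- p-SBL update decreases the surrogate: with γ′[i] = (T₁/T₂)^p γ[i],
g(γ′; γ) ≤ g(γ; γ); equality for p = 1; strict for 0 < p < 1 if T₁ ≠ T₂ somewhere. -/
theorem stmt4 {N M L : ℕ} (hL : 1 ≤ L) (Φ : Matrix (Fin N) (Fin M) ℝ) (σ2 : ℝ)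
    (hσ : 0 < σ2) (y : Fin L → Fin N → ℝ) (γ : Fin M → ℝ) (hγ : ∀ i, 0 < γ i)
    (hT1 : ∀ i, 0 < T1 Φ σ2 y γ i) (hT2 : ∀ i, 0 < T2 Φ σ2 γ i)
    (p : ℝ) (hp0 : 0 < p) (hp1 : p ≤ 1)
    (γ' : Fin M → ℝ) (hγ' : ∀ i, γ' i = (T1 Φ σ2 y γ i / T2 Φ σ2 γ i) ^ p * γ i) :
    (∑ i, (T2 Φ σ2 γ i * γ' i + (γ i) ^ 2 * T1 Φ σ2 y γ i / γ' i) ≤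
      ∑ i, γ i * (T1 Φ σ2 y γ i + T2 Φ σ2 γ i)) ∧
    (p = 1 →
      ∑ i, (T2 Φ σ2 γ i * γ' i + (γ i) ^ 2 * T1 Φ σ2 y γ i / γ' i) =
        ∑ i, γ i * (T1 Φ σ2 y γ i + T2 Φ σ2 γ i)) ∧
    (p < 1 → (∃ i, T1 Φ σ2 y γ i ≠ T2 Φ σ2 γ i) →
      ∑ i, (T2 Φ σ2 γ i * γ' i + (γ i) ^ 2 * T1 Φ σ2 y γ i / γ' i) <
        ∑ i, γ i * (T1 Φ σ2 y γ i + T2 Φ σ2 γ i)) := by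
  have hle : ∀ i, T2 Φ σ2 γ i * γ' i + (γ i) ^ 2 * T1 Φ σ2 y γ i / γ' i ≤
      γ i * (T1 Φ σ2 y γ i + T2 Φ σ2 γ i) := by
    intro i
    have hid := term_identity (hT1 i) (hT2 i) (hγ i) (p := p)
    have hr : 0 < T1 Φ σ2 y γ i / T2 Φ σ2 γ i := div_pos (hT1 i) (hT2 i)
    have hfac := factor_nonneg hr hp0.le (by linarith : (0:ℝ) ≤ 1 - p)
    have hgb : 0 ≤ γ i * T2 Φ σ2 γ i := mul_nonneg (hγ i).le (hT2 i).le
    rw [hγ' i]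
    nlinarith [mul_nonneg hgb hfac]
  refine ⟨Finset.sum_le_sum fun i _ => hle i, ?_, ?_⟩
  · intro hp
    refine Finset.sum_congr rfl fun i _ => ?_
    have hid := term_identity (hT1 i) (hT2 i) (hγ i) (p := p)
    rw [hp] at hid
    have h0 : (T1 Φ σ2 y γ i / T2 Φ σ2 γ i : ℝ) ^ ((1:ℝ) - 1) = 1 := by
      rw [show (1:ℝ) - 1 = 0 by norm_num, Real.rpow_zero]
    rw [h0] at hid
    rw [hγ' i, hp]
    linarith [hid]
  · rintro hplt ⟨i0, hne⟩
    refine Finset.sum_lt_sum (fun i _ => hle i) ⟨i0, Finset.mem_univ i0, ?_⟩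
    have hid := term_identity (hT1 i0) (hT2 i0) (hγ i0) (p := p)
    have hr : 0 < T1 Φ σ2 y γ i0 / T2 Φ σ2 γ i0 := div_pos (hT1 i0) (hT2 i0)
    have hr1 : T1 Φ σ2 y γ i0 / T2 Φ σ2 γ i0 ≠ 1 := by
      intro h
      rw [div_eq_one_iff_eq (hT2 i0).ne'] at h
      exact hne h
    have hfac := factor_pos hr hr1 hp0 (by linarith : (0:ℝ) < 1 - p)
    have hgb : 0 < γ i0 * T2 Φ σ2 γ i0 := mul_pos (hγ i0) (hT2 i0)
    rw [hγ' i0]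
    nlinarith [mul_pos hgb hfac]
end

section
/- (Positivity of the Hadamard-squared Hessian on the nonnegative orthant.) Let S ∈ ℝ^{N×N} be symmetric positive definite and let Φ ∈ ℝ^{N×M} have all columns nonzero. Set B = Φᵀ S⁻¹ Φ and let H = B ⊙ B be its entrywise (Hadamard) square. Then for every v ∈ ℝ^M with nonnegative entries and v ≠ 0, one has vᵀ H v > 0. -/
open Matrix

/-- positivity of the Hadamard-squared Hessian on the nonnegative orthant:
with B = Φᵀ S⁻¹ Φ and H = B ⊙ B, for every nonnegative nonzero v, vᵀ H v > 0. -/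
theorem stmt7 {N M : ℕ} (S : Matrix (Fin N) (Fin N) ℝ) (hS : S.PosDef)
    (Φ : Matrix (Fin N) (Fin M) ℝ) (hΦ : ∀ i : Fin M, (fun n => Φ n i) ≠ 0)
    (v : Fin M → ℝ) (hv0 : ∀ i, 0 ≤ v i) (hv : v ≠ 0) :
    0 < v ⬝ᵥ ((Φᵀ * S⁻¹ * Φ) ⊙ (Φᵀ * S⁻¹ * Φ)) *ᵥ v := by
  set B := Φᵀ * S⁻¹ * Φ with hB
  obtain ⟨k, hk⟩ : ∃ k, 0 < v k := by
    by_contra h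
    push_neg at h
    exact hv (funext fun i => le_antisymm (h i) (hv0 i))
  have hBkk : 0 < B k k := by
    have h2 := hS.inv.dotProduct_mulVec_pos (hΦ k)
    have e : B k k = star (fun n => Φ n k) ⬝ᵥ S⁻¹ *ᵥ (fun n => Φ n k) := by
      simp only [hB, Matrix.mul_apply, Matrix.mulVec, dotProduct,
        Matrix.transpose_apply, Finset.sum_mul, Finset.mul_sum, star_trivial,
        Pi.star_apply, ]
      rw [Finset.sum_comm]
      exact Finset.sum_congr rfl fun n _ => Finset.sum_congr rfl fun m _ => by ring
    rw [e]
    simpa using h2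
  have hBB : ∀ i j, 0 ≤ (B ⊙ B) i j := fun i j => by
    simp only [Matrix.hadamard_apply]; exact mul_self_nonneg _
  have key : 0 < ∑ i, ∑ j, v i * ((B ⊙ B) i j * v j) := by
    apply Finset.sum_pos'
      (fun i _ => Finset.sum_nonneg fun j _ =>
        mul_nonneg (hv0 i) (mul_nonneg (hBB i j) (hv0 j)))
    refine ⟨k, Finset.mem_univ k, Finset.sum_pos'
      (fun j _ => mul_nonneg (hv0 k) (mul_nonneg (hBB k j) (hv0 j)))
      ⟨k, Finset.mem_univ k, ?_⟩⟩
    have : 0 < (B ⊙ B) k k := by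
      simp only [Matrix.hadamard_apply]; exact mul_pos hBkk hBkk
    exact mul_pos hk (mul_pos this hk)
  simpa [dotProduct, Matrix.mulVec, Finset.mul_sum] using key
end

section
/- (Per-coordinate EM descent on the p-SBL surrogate.) Let a ≥ 0, b > 0, γ > 0 be real numbers with b·γ < 1, and set γ′ = γ + (a − b)·γ². Then γ′ > 0, and b·γ′ + a·γ²/γ′ − γ·(a + b) = (a − b)²·γ³·(b·γ − 1)/γ′ ≤ 0; in particular b·γ′ + a·γ²/γ′ ≤ γ·(a + b). -/
/-- per-coordinate EM descent on the p-SBL surrogate: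
for a ≥ 0, b > 0, γ > 0 with b·γ < 1 and γ′ = γ + (a − b)·γ², one has γ′ > 0,
b·γ′ + a·γ²/γ′ − γ·(a + b) = (a − b)²·γ³·(b·γ − 1)/γ′ ≤ 0, and hence
b·γ′ + a·γ²/γ′ ≤ γ·(a + b). -/
theorem stmt9 (a b γ γ' : ℝ) (ha : 0 ≤ a) (hb : 0 < b) (hγ : 0 < γ)
    (hbγ : b * γ < 1) (hγ' : γ' = γ + (a - b) * γ ^ 2) :
    0 < γ' ∧
    b * γ' + a * γ ^ 2 / γ' - γ * (a + b) = (a - b) ^ 2 * γ ^ 3 * (b * γ - 1) / γ' ∧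
    (a - b) ^ 2 * γ ^ 3 * (b * γ - 1) / γ' ≤ 0 ∧
    b * γ' + a * γ ^ 2 / γ' ≤ γ * (a + b) := by
  have hpos : 0 < γ' := by
    have : γ' = γ * (1 + a * γ - b * γ) := by rw [hγ']; ring
    rw [this]
    have : 0 < 1 + a * γ - b * γ := by nlinarith [mul_nonneg ha hγ.le]
    positivity
  have hne : γ' ≠ 0 := ne_of_gt hpos
  have heq : b * γ' + a * γ ^ 2 / γ' - γ * (a + b)
      = (a - b) ^ 2 * γ ^ 3 * (b * γ - 1) / γ' := by
    subst hγ'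
    rw [eq_div_iff hne, sub_mul, add_mul, div_mul_cancel₀ _ hne]
    ring
  have hle : (a - b) ^ 2 * γ ^ 3 * (b * γ - 1) / γ' ≤ 0 := by
    apply div_nonpos_of_nonpos_of_nonneg _ hpos.le
    have h1 : b * γ - 1 ≤ 0 := by linarith
    exact mul_nonpos_of_nonneg_of_nonpos (by positivity) h1
  exact ⟨hpos, heq, hle, by linarith [heq, hle]⟩
end

section
/- (EM update decreases the p-SBL surrogate and the SBL objective; Theorem 1, EM compatibility part.) Let γ ∈ ℝ^M have strictly positive entries and define the EM update γ_EM by γ_EM[i] = γ[i] + (T₁(γ)[i] − T₂(γ)[i])·γ[i]² for each i. Then γ_EM has strictly positive entries, Σ_{i=1}^M [ T₂(γ)[i]·γ_EM[i] + γ[i]²·T₁(γ)[i]/γ_EM[i] ] ≤ Σ_{i=1}^M γ[i]·( T₁(γ)[i] + T₂(γ)[i] ) (i.e., g(γ_EM; γ) ≤ g(γ; γ)), and consequently f(γ_EM) ≤ f(γ). -/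
open Matrix Finset Real

/-! ### Auxiliary lemmas -/

lemma qf {N M : ℕ} (Φ : Matrix (Fin N) (Fin M) ℝ) (σ2 : ℝ) (γ : Fin M → ℝ)
    (v : Fin N → ℝ) :
    v ⬝ᵥ (Sig Φ σ2 γ) *ᵥ v
      = σ2 * (v ⬝ᵥ v) + ∑ i, γ i * ((fun n => Φ n i) ⬝ᵥ v) ^ 2 := by
  have h1 : (Sig Φ σ2 γ) *ᵥ v
      = Φ *ᵥ (Matrix.diagonal γ *ᵥ (Φᵀ *ᵥ v)) + σ2 • v := by
    simp [Sig, Matrix.add_mulVec, Matrix.mulVec_mulVec, Matrix.smul_mulVec,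
      Matrix.mul_assoc]
  rw [h1, dotProduct_add, Matrix.dotProduct_mulVec (A := Φ)]
  have h2 : v ᵥ* Φ = Φᵀ *ᵥ v := (Matrix.mulVec_transpose Φ v).symm
  rw [h2]
  have h3 : ∀ i, (Φᵀ *ᵥ v) i = (fun n => Φ n i) ⬝ᵥ v := by
    intro i; simp [Matrix.mulVec, dotProduct, Matrix.transpose_apply]
  simp only [dotProduct, Matrix.mulVec_diagonal, dotProduct_smul, smul_eq_mul]
  rw [add_comm]
  congr 1
  · rw [Finset.mul_sum]
    refine Finset.sum_congr rfl fun n _ => by simp [Pi.smul_apply]; ring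
  · refine Finset.sum_congr rfl fun i _ => ?_
    rw [h3 i]; simp [dotProduct]; ring

lemma sig_herm {N M : ℕ} (Φ : Matrix (Fin N) (Fin M) ℝ) (σ2 : ℝ) (γ : Fin M → ℝ) :
    (Sig Φ σ2 γ).IsHermitian := by
  unfold Matrix.IsHermitian
  rw [Matrix.conjTranspose_eq_transpose_of_trivial]
  simp [Sig, Matrix.transpose_add, Matrix.transpose_mul, Matrix.transpose_smul, Matrix.mul_assoc]

lemma T2_pieces {N M : ℕ} (Φ : Matrix (Fin N) (Fin M) ℝ) {σ2 : ℝ} (hσ : 0 < σ2)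
    {γ : Fin M → ℝ} (hγ : ∀ i, 0 < γ i) (i : Fin M) :
    0 ≤ T2 Φ σ2 γ i ∧ γ i * T2 Φ σ2 γ i < 1 := by
  set A := Sig Φ σ2 γ with hA
  have hpd : A.PosDef := sig_posDef Φ hσ (fun j => (hγ j).le)
  set φ : Fin N → ℝ := fun n => Φ n i with hφ
  set v : Fin N → ℝ := A⁻¹ *ᵥ φ with hv
  have hAv : A *ᵥ v = φ := by
    rw [hv, Matrix.mulVec_mulVec, Matrix.mul_nonsing_inv _ hpd.det_pos.ne'.isUnit,
      Matrix.one_mulVec]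
  have hs : T2 Φ σ2 γ i = v ⬝ᵥ A *ᵥ v := by
    rw [hAv, T2, dotProduct_comm]
  set s := T2 Φ σ2 γ i with hsdef
  have hqf : s = σ2 * (v ⬝ᵥ v) + ∑ j, γ j * ((fun n => Φ n j) ⬝ᵥ v) ^ 2 := by
    rw [hs, qf]
  have hterm : γ i * (φ ⬝ᵥ v) ^ 2 ≤ ∑ j, γ j * ((fun n => Φ n j) ⬝ᵥ v) ^ 2 :=
    Finset.single_le_sum (f := fun j => γ j * ((fun n => Φ n j) ⬝ᵥ v) ^ 2)
      (fun j _ => mul_nonneg (hγ j).le (sq_nonneg _)) (Finset.mem_univ i)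
  have hsv : s = φ ⬝ᵥ v := rfl
  have hvv : 0 ≤ v ⬝ᵥ v := by
    simpa [dotProduct] using Finset.sum_nonneg (fun n (_ : n ∈ Finset.univ) => mul_self_nonneg (v n))
  have hges : σ2 * (v ⬝ᵥ v) + γ i * s ^ 2 ≤ s := by
    have h' : γ i * s ^ 2 ≤ ∑ j, γ j * ((fun n => Φ n j) ⬝ᵥ v) ^ 2 := by
      rw [hsv]; exact hterm
    nth_rewrite 2 [hqf]
    linarith
  have hs0 : 0 ≤ s := by nlinarith [mul_nonneg (hγ i).le (sq_nonneg s), mul_nonneg hσ.le hvv]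
  constructor
  · exact hs0
  · rcases eq_or_ne v 0 with h0 | h0
    · have : s = 0 := by rw [hsv, h0, dotProduct_zero]
      rw [this, mul_zero]; norm_num
    · have hvvpos : 0 < v ⬝ᵥ v := by
        rw [← star_trivial v]
        exact dotProduct_star_self_pos_iff.mpr h0
      have hslt : γ i * s ^ 2 < s := by nlinarith [mul_pos hσ hvvpos]
      nlinarith [hγ i, hslt, hs0]

lemma em_alg {a b c u : ℝ} (ha : 0 ≤ a) (hb : 0 ≤ b) (hc : 0 < c) (hbc : b * c < 1)
    (hu : u = c + (a - b) * c ^ 2) :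
    0 < u ∧ b * u + c ^ 2 * a / u ≤ c * (a + b) := by
  have hupos : 0 < u := by
    nlinarith [mul_pos hc (sub_pos.2 hbc), mul_nonneg ha (sq_nonneg c)]
  refine ⟨hupos, ?_⟩
  have key : c * (a + b) * u - (b * u * u + c ^ 2 * a) = c ^ 3 * (a - b) ^ 2 * (1 - b * c) := by
    subst hu; ring
  have h2 : c ^ 2 * a / u ≤ c * (a + b) - b * u := by
    rw [div_le_iff₀ hupos]
    nlinarith [mul_nonneg (mul_nonneg (pow_nonneg hc.le 3) (sq_nonneg (a - b))) (sub_pos.2 hbc).le]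
  linarith

lemma datafit_eq {N M : ℕ} (Φ : Matrix (Fin N) (Fin M) ℝ) {σ2 : ℝ} (hσ : 0 < σ2)
    {γ : Fin M → ℝ} (hγ : ∀ i, 0 ≤ γ i) (y : Fin N → ℝ) :
    y ⬝ᵥ (Sig Φ σ2 γ)⁻¹ *ᵥ y
      = σ2 * (((Sig Φ σ2 γ)⁻¹ *ᵥ y) ⬝ᵥ ((Sig Φ σ2 γ)⁻¹ *ᵥ y))
        + ∑ i, γ i * ((fun n => Φ n i) ⬝ᵥ ((Sig Φ σ2 γ)⁻¹ *ᵥ y)) ^ 2 := by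
  set A := Sig Φ σ2 γ
  have hpd : A.PosDef := sig_posDef Φ hσ hγ
  set z : Fin N → ℝ := A⁻¹ *ᵥ y with hz
  have hAz : A *ᵥ z = y := by
    rw [hz, Matrix.mulVec_mulVec, Matrix.mul_nonsing_inv _ hpd.det_pos.ne'.isUnit,
      Matrix.one_mulVec]
  calc y ⬝ᵥ z = z ⬝ᵥ A *ᵥ z := by rw [hAz, dotProduct_comm]
    _ = _ := qf Φ σ2 γ z

lemma datafit_le {N M : ℕ} (Φ : Matrix (Fin N) (Fin M) ℝ) {σ2 : ℝ} (hσ : 0 < σ2)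
    {γ γ' : Fin M → ℝ} (hγ : ∀ i, 0 ≤ γ i) (hγ' : ∀ i, 0 < γ' i) (y : Fin N → ℝ) :
    y ⬝ᵥ (Sig Φ σ2 γ')⁻¹ *ᵥ y
      ≤ σ2 * (((Sig Φ σ2 γ)⁻¹ *ᵥ y) ⬝ᵥ ((Sig Φ σ2 γ)⁻¹ *ᵥ y))
        + ∑ i, (γ i) ^ 2 * ((fun n => Φ n i) ⬝ᵥ ((Sig Φ σ2 γ)⁻¹ *ᵥ y)) ^ 2 / γ' i := by
  set A := Sig Φ σ2 γ with hAdef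
  set B := Sig Φ σ2 γ' with hBdef
  have hpdB : B.PosDef := sig_posDef Φ hσ (fun i => (hγ' i).le)
  set z : Fin N → ℝ := A⁻¹ *ᵥ y with hz
  set w : Fin N → ℝ := B⁻¹ *ᵥ y with hw
  have hBw : B *ᵥ w = y := by
    rw [hw, Matrix.mulVec_mulVec, Matrix.mul_nonsing_inv _ hpdB.det_pos.ne'.isUnit,
      Matrix.one_mulVec]
  set x : Fin M → ℝ := fun i => γ i * ((fun n => Φ n i) ⬝ᵥ z) with hx
  have hPhix : Φ *ᵥ x = A *ᵥ z - σ2 • z := by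
    have h1 : x = Matrix.diagonal γ *ᵥ (Φᵀ *ᵥ z) := by
      funext i
      rw [Matrix.mulVec_diagonal]
      simp [hx, Matrix.mulVec, dotProduct, Matrix.transpose_apply]
    rw [h1, Matrix.mulVec_mulVec, Matrix.mulVec_mulVec]
    have h2 : A *ᵥ z = (Φ * Matrix.diagonal γ * Φᵀ) *ᵥ z + σ2 • z := by
      simp [hAdef, Sig, Matrix.add_mulVec, Matrix.smul_mulVec]
    rw [h2]; abel
  have hpdA : A.PosDef := sig_posDef Φ hσ hγ
  have hAz : A *ᵥ z = y := by
    rw [hz, Matrix.mulVec_mulVec, Matrix.mul_nonsing_inv _ hpdA.det_pos.ne'.isUnit,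
      Matrix.one_mulVec]
  have hy : y = Φ *ᵥ x + σ2 • z := by rw [hPhix, hAz]; abel
  set p : Fin M → ℝ := fun i => (fun n => Φ n i) ⬝ᵥ w with hp
  have hwBw : w ⬝ᵥ B *ᵥ w = σ2 * (w ⬝ᵥ w) + ∑ i, γ' i * p i ^ 2 := qf Φ σ2 γ' w
  have hwy : w ⬝ᵥ B *ᵥ w = y ⬝ᵥ w := by rw [hBw]; exact dotProduct_comm w y
  have hPhixw : (Φ *ᵥ x) ⬝ᵥ w = ∑ i, x i * p i := by
    rw [dotProduct_comm, Matrix.dotProduct_mulVec]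
    have h2 : w ᵥ* Φ = Φᵀ *ᵥ w := (Matrix.mulVec_transpose Φ w).symm
    rw [h2, dotProduct]
    refine Finset.sum_congr rfl fun i _ => ?_
    have : (Φᵀ *ᵥ w) i = p i := by
      simp [hp, Matrix.mulVec, dotProduct, Matrix.transpose_apply]
    rw [this]; ring
  have hyw : y ⬝ᵥ w = σ2 * (z ⬝ᵥ w) + ∑ i, x i * p i := by
    nth_rewrite 1 [hy]
    rw [add_dotProduct, hPhixw, smul_dotProduct, smul_eq_mul]
    ring
  have hval : y ⬝ᵥ B⁻¹ *ᵥ y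
      = 2 * (σ2 * (z ⬝ᵥ w) + ∑ i, x i * p i) - (σ2 * (w ⬝ᵥ w) + ∑ i, γ' i * p i ^ 2) := by
    have : y ⬝ᵥ B⁻¹ *ᵥ y = y ⬝ᵥ w := rfl
    rw [this]
    rw [← hwBw, hwy, ← hyw]
    ring
  have hb1 : 2 * (z ⬝ᵥ w) - w ⬝ᵥ w ≤ z ⬝ᵥ z := by
    have h : (0:ℝ) ≤ ∑ n, (z n - w n) ^ 2 := Finset.sum_nonneg fun n _ => sq_nonneg _
    have hexp : ∑ n, (z n - w n) ^ 2 = z ⬝ᵥ z - 2 * (z ⬝ᵥ w) + w ⬝ᵥ w := by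
      simp only [dotProduct, Finset.mul_sum, ← Finset.sum_add_distrib,
        ← Finset.sum_sub_distrib]
      exact Finset.sum_congr rfl fun n _ => by ring
    linarith
  have hb2 : ∀ i, 2 * (x i * p i) - γ' i * p i ^ 2 ≤ x i ^ 2 / γ' i := by
    intro i
    rw [le_div_iff₀ (hγ' i)]
    nlinarith [sq_nonneg (x i - γ' i * p i)]
  have hb2s : ∑ i, (2 * (x i * p i) - γ' i * p i ^ 2) ≤ ∑ i, x i ^ 2 / γ' i :=
    Finset.sum_le_sum fun i _ => hb2 i
  have hxsq : ∀ i, x i ^ 2 = (γ i) ^ 2 * ((fun n => Φ n i) ⬝ᵥ z) ^ 2 := by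
    intro i; rw [hx]; ring
  have htarget : ∑ i, (γ i) ^ 2 * ((fun n => Φ n i) ⬝ᵥ z) ^ 2 / γ' i
      = ∑ i, x i ^ 2 / γ' i :=
    Finset.sum_congr rfl fun i _ => by rw [hxsq i]
  rw [hval, htarget]
  rw [Finset.sum_sub_distrib, ← Finset.mul_sum] at hb2s
  have := mul_le_mul_of_nonneg_left hb1 hσ.le
  linarith [this, hb2s]

lemma trace_eq_sum_eig {n : ℕ} {A : Matrix (Fin n) (Fin n) ℝ} (hA : A.IsHermitian) :
    A.trace = ∑ i, hA.eigenvalues i := by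
  rw [hA.trace_eq_sum_eigenvalues]
  simp

open scoped MatrixOrder in
lemma logdet_ineq {n : ℕ} {A B : Matrix (Fin n) (Fin n) ℝ}
    (hA : A.PosDef) (hB : B.PosDef) :
    Real.log B.det ≤ Real.log A.det + ((A⁻¹ * B).trace - n) := by
  set S := CFC.sqrt A with hSdef
  have hSpsd : S.PosSemidef := (CFC.sqrt_nonneg A).posSemidef
  have hSS : S * S = A := CFC.sqrt_mul_sqrt_self A hA.posSemidef.nonneg
  have hdetS : 0 < S.det := by
    have h1 : 0 ≤ S.det := by
      rw [hSpsd.isHermitian.det_eq_prod_eigenvalues]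
      exact Finset.prod_nonneg fun i _ => by simpa using hSpsd.eigenvalues_nonneg i
    have h2 : S.det * S.det = A.det := by rw [← Matrix.det_mul, hSS]
    rcases h1.eq_or_lt with h | h
    · exfalso; have := hA.det_pos; rw [← h2, ← h] at this; simp at this
    · exact h
  have hSsymm : S⁻¹ᵀ = S⁻¹ := by
    have := hSpsd.isHermitian.inv
    rwa [Matrix.IsHermitian, Matrix.conjTranspose_eq_transpose_of_trivial] at this
  have hSinv : S⁻¹ * S⁻¹ = A⁻¹ := by rw [← Matrix.mul_inv_rev, hSS]
  set C := S⁻¹ * B * S⁻¹ with hCdef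
  have hCpsd : C.PosSemidef := by
    have h := hB.posSemidef.mul_mul_conjTranspose_same S⁻¹
    rwa [Matrix.conjTranspose_eq_transpose_of_trivial, hSsymm] at h
  have hCpd : C.PosDef := by
    refine Matrix.PosDef.of_dotProduct_mulVec_pos hCpsd.isHermitian fun x hx => ?_
    have hxS : S⁻¹ *ᵥ x ≠ 0 := by
      intro h
      apply hx
      have : S *ᵥ (S⁻¹ *ᵥ x) = x := by
        rw [Matrix.mulVec_mulVec, Matrix.mul_nonsing_inv _ hdetS.ne'.isUnit,
          Matrix.one_mulVec]
      rw [← this, h, Matrix.mulVec_zero]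
    have hcomp : x ⬝ᵥ C *ᵥ x = (S⁻¹ *ᵥ x) ⬝ᵥ B *ᵥ (S⁻¹ *ᵥ x) := by
      rw [hCdef, Matrix.mul_assoc, ← Matrix.mulVec_mulVec, Matrix.dotProduct_mulVec,
        ← hSsymm, Matrix.vecMul_transpose, Matrix.mulVec_mulVec]
      rw [← Matrix.mulVec_mulVec, Matrix.dotProduct_mulVec, hSsymm,
        ← Matrix.dotProduct_mulVec]
    rw [star_trivial, hcomp]
    simpa [star_trivial] using hB.dotProduct_mulVec_pos hxS
  have hdetC : C.det = B.det / A.det := by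
    rw [hCdef, Matrix.det_mul, Matrix.det_mul, Matrix.det_nonsing_inv]
    have : A.det = S.det * S.det := by rw [← Matrix.det_mul, hSS]
    rw [this, Ring.inverse_eq_inv']
    field_simp
  have htrC : C.trace = (A⁻¹ * B).trace := by
    rw [hCdef, Matrix.trace_mul_comm, ← Matrix.mul_assoc, hSinv]
  have hlog : Real.log C.det ≤ C.trace - n := by
    have hev := hCpd.eigenvalues_pos
    rw [hCpd.isHermitian.det_eq_prod_eigenvalues]
    rw [trace_eq_sum_eig hCpd.isHermitian]
    simp only [RCLike.ofReal_real_eq_id, id_eq]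
    rw [Real.log_prod (fun i _ => (hev i).ne')]
    have : ∀ i ∈ Finset.univ, Real.log (hCpd.isHermitian.eigenvalues i)
        ≤ hCpd.isHermitian.eigenvalues i - 1 :=
      fun i _ => Real.log_le_sub_one_of_pos (hev i)
    calc ∑ i, Real.log (hCpd.isHermitian.eigenvalues i)
        ≤ ∑ i, (hCpd.isHermitian.eigenvalues i - 1) := Finset.sum_le_sum this
      _ = (∑ i, hCpd.isHermitian.eigenvalues i) - n := by
          rw [Finset.sum_sub_distrib]; simp
  rw [hdetC, Real.log_div hB.det_pos.ne' hA.det_pos.ne'] at hlog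
  rw [htrC] at hlog
  linarith

lemma trace_formula {N M : ℕ} (Φ : Matrix (Fin N) (Fin M) ℝ) {σ2 : ℝ} (hσ : 0 < σ2)
    {γ γ' : Fin M → ℝ} (hγ : ∀ i, 0 ≤ γ i) :
    ((Sig Φ σ2 γ)⁻¹ * Sig Φ σ2 γ').trace
      = N + ∑ i, (γ' i - γ i) * T2 Φ σ2 γ i := by
  set A := Sig Φ σ2 γ with hAdef
  have hpdA : A.PosDef := sig_posDef Φ hσ hγ
  set D : Matrix (Fin M) (Fin M) ℝ := Matrix.diagonal (fun i => γ' i - γ i) with hD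
  have hBA : Sig Φ σ2 γ' = A + Φ * D * Φᵀ := by
    rw [hAdef, Sig, Sig, hD]
    have : Matrix.diagonal γ + Matrix.diagonal (fun i => γ' i - γ i) = Matrix.diagonal γ' := by
      rw [Matrix.diagonal_add]; congr 1; funext i; ring
    rw [← this, Matrix.mul_add, Matrix.add_mul]
    abel
  rw [hBA, Matrix.mul_add, Matrix.nonsing_inv_mul _ hpdA.det_pos.ne'.isUnit,
    Matrix.trace_add, Matrix.trace_one]
  congr 1
  · simp
  · have h1 : A⁻¹ * (Φ * D * Φᵀ) = (A⁻¹ * Φ * D) * Φᵀ := by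
      simp only [Matrix.mul_assoc]
    rw [h1, Matrix.trace_mul_comm, ← Matrix.mul_assoc]
    have h2 : ∀ i, (Φᵀ * (A⁻¹ * Φ)) i i = T2 Φ σ2 γ i := by
      intro i
      simp [Matrix.mul_apply, Matrix.mulVec, dotProduct, T2, Matrix.transpose_apply,
        Finset.mul_sum, hAdef]
    rw [Matrix.mul_assoc (Φᵀ) _ _]
    have h3 : (Φᵀ * (A⁻¹ * Φ) * D).trace
        = ∑ i, (γ' i - γ i) * ((Φᵀ * (A⁻¹ * Φ)) i i) := by
      rw [hD, Matrix.trace]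
      refine Finset.sum_congr rfl fun i _ => ?_
      rw [Matrix.diag_apply, Matrix.mul_diagonal]
      ring
    rw [← Matrix.mul_assoc, h3]
    exact Finset.sum_congr rfl fun i _ => by rw [h2 i]

/-- EM update decreases the p-SBL surrogate and the SBL objective:
γ_EM[i] = γ[i] + (T₁ − T₂)γ[i]² is entrywise positive, g(γ_EM; γ) ≤ g(γ; γ),
and consequently f(γ_EM) ≤ f(γ). -/
theorem stmt10 {N M L : ℕ} (hL : 1 ≤ L) (Φ : Matrix (Fin N) (Fin M) ℝ) (σ2 : ℝ)
    (hσ : 0 < σ2) (y : Fin L → Fin N → ℝ) (γ : Fin M → ℝ) (hγ : ∀ i, 0 < γ i)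
    (γEM : Fin M → ℝ)
    (hEM : ∀ i, γEM i = γ i + (T1 Φ σ2 y γ i - T2 Φ σ2 γ i) * (γ i) ^ 2) :
    (∀ i, 0 < γEM i) ∧
    (∑ i, (T2 Φ σ2 γ i * γEM i + (γ i) ^ 2 * T1 Φ σ2 y γ i / γEM i) ≤
      ∑ i, γ i * (T1 Φ σ2 y γ i + T2 Φ σ2 γ i)) ∧
    fSBL Φ σ2 y γEM ≤ fSBL Φ σ2 y γ := by
  have hT1 : ∀ i, 0 ≤ T1 Φ σ2 y γ i := by
    intro i
    refine mul_nonneg (by positivity) (Finset.sum_nonneg fun l _ => sq_nonneg _)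
  have hkey : ∀ i, 0 < γEM i ∧
      T2 Φ σ2 γ i * γEM i + (γ i) ^ 2 * T1 Φ σ2 y γ i / γEM i
        ≤ γ i * (T1 Φ σ2 y γ i + T2 Φ σ2 γ i) := by
    intro i
    obtain ⟨hb, hbc⟩ := T2_pieces Φ hσ hγ i
    have hbc' : T2 Φ σ2 γ i * γ i < 1 := by rw [mul_comm]; exact hbc
    obtain ⟨h1, h2⟩ := em_alg (hT1 i) hb (hγ i) hbc' (hEM i)
    exact ⟨h1, by rw [mul_comm (T2 Φ σ2 γ i) (γEM i)] at h2 ⊢; linarith⟩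
  have hpos : ∀ i, 0 < γEM i := fun i => (hkey i).1
  refine ⟨hpos, Finset.sum_le_sum fun i _ => (hkey i).2, ?_⟩
  -- main descent
  set A := Sig Φ σ2 γ with hAdef
  set B := Sig Φ σ2 γEM with hBdef
  have hpdA : A.PosDef := sig_posDef Φ hσ fun i => (hγ i).le
  have hpdB : B.PosDef := sig_posDef Φ hσ fun i => (hpos i).le
  have hLpos : (0:ℝ) < (L:ℝ) := by exact_mod_cast hL
  -- log-det part
  have hld : Real.log B.det ≤ Real.log A.det + ∑ i, (γEM i - γ i) * T2 Φ σ2 γ i := by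
    have h := logdet_ineq hpdA hpdB
    have h2 := trace_formula Φ hσ (γ' := γEM) (fun i => (hγ i).le)
    rw [← hAdef, ← hBdef] at h2
    rw [h2] at h
    linarith
  -- data part, per sample
  set z : Fin L → Fin N → ℝ := fun l => A⁻¹ *ᵥ y l with hzdef
  set P : Fin L → Fin M → ℝ := fun l i => (fun n => Φ n i) ⬝ᵥ (A⁻¹ *ᵥ y l) with hPdef
  have hdata : ∀ l, y l ⬝ᵥ B⁻¹ *ᵥ y l
      ≤ y l ⬝ᵥ A⁻¹ *ᵥ y l
        + (∑ i, (γ i) ^ 2 * P l i ^ 2 / γEM i - ∑ i, γ i * P l i ^ 2) := by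
    intro l
    have hle := datafit_le Φ hσ (γ' := γEM) (fun i => (hγ i).le) hpos (y l)
    have heq := datafit_eq Φ hσ (fun i => (hγ i).le) (y l)
    rw [← hAdef] at hle heq
    rw [← hBdef] at hle
    have hle' : y l ⬝ᵥ B⁻¹ *ᵥ y l
        ≤ σ2 * ((A⁻¹ *ᵥ y l) ⬝ᵥ (A⁻¹ *ᵥ y l)) + ∑ i, (γ i) ^ 2 * P l i ^ 2 / γEM i := hle
    have heq' : y l ⬝ᵥ A⁻¹ *ᵥ y l
        = σ2 * ((A⁻¹ *ᵥ y l) ⬝ᵥ (A⁻¹ *ᵥ y l)) + ∑ i, γ i * P l i ^ 2 := heq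
    linarith
  -- sum over l
  have hsum : ∑ l, y l ⬝ᵥ B⁻¹ *ᵥ y l
      ≤ ∑ l, (y l ⬝ᵥ A⁻¹ *ᵥ y l
        + (∑ i, (γ i) ^ 2 * P l i ^ 2 / γEM i - ∑ i, γ i * P l i ^ 2)) :=
    Finset.sum_le_sum fun l _ => hdata l
  -- identify the swapped sums with T1
  have hswap1 : (1 / (L:ℝ)) * ∑ l, ∑ i, (γ i) ^ 2 * P l i ^ 2 / γEM i
      = ∑ i, (γ i) ^ 2 * T1 Φ σ2 y γ i / γEM i := by
    rw [Finset.sum_comm, Finset.mul_sum]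
    refine Finset.sum_congr rfl fun i _ => ?_
    have hT : T1 Φ σ2 y γ i = (1/(L:ℝ)) * ∑ l, P l i ^ 2 := by rw [T1, ← hAdef]
    have hsum : ∑ l, (γ i) ^ 2 * P l i ^ 2 / γEM i
        = (γ i) ^ 2 * (∑ l, P l i ^ 2) / γEM i := by
      rw [Finset.mul_sum, Finset.sum_div]
    rw [hT, hsum]
    ring
  have hswap2 : (1 / (L:ℝ)) * ∑ l, ∑ i, γ i * P l i ^ 2
      = ∑ i, γ i * T1 Φ σ2 y γ i := by
    rw [Finset.sum_comm, Finset.mul_sum]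
    refine Finset.sum_congr rfl fun i _ => ?_
    have hT : T1 Φ σ2 y γ i = (1/(L:ℝ)) * ∑ l, P l i ^ 2 := by rw [T1, ← hAdef]
    rw [hT, ← Finset.mul_sum]
    ring
  -- put everything together
  have hfB : fSBL Φ σ2 y γEM
      = Real.log B.det + (1 / (L:ℝ)) * ∑ l, y l ⬝ᵥ B⁻¹ *ᵥ y l := rfl
  have hfA : fSBL Φ σ2 y γ
      = Real.log A.det + (1 / (L:ℝ)) * ∑ l, y l ⬝ᵥ A⁻¹ *ᵥ y l := rfl
  rw [hfB, hfA]
  have hLinv : 0 < 1 / (L:ℝ) := by positivity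
  have hsum' : (1 / (L:ℝ)) * ∑ l, y l ⬝ᵥ B⁻¹ *ᵥ y l
      ≤ (1 / (L:ℝ)) * ∑ l, y l ⬝ᵥ A⁻¹ *ᵥ y l
        + (∑ i, (γ i) ^ 2 * T1 Φ σ2 y γ i / γEM i - ∑ i, γ i * T1 Φ σ2 y γ i) := by
    have h := mul_le_mul_of_nonneg_left hsum hLinv.le
    rw [Finset.sum_add_distrib, Finset.sum_sub_distrib] at h
    rw [mul_add, mul_sub] at h
    rw [hswap1, hswap2] at h
    linarith
  -- surrogate inequality
  have hsurr : ∑ i, (T2 Φ σ2 γ i * γEM i + (γ i) ^ 2 * T1 Φ σ2 y γ i / γEM i)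
      ≤ ∑ i, γ i * (T1 Φ σ2 y γ i + T2 Φ σ2 γ i) :=
    Finset.sum_le_sum fun i _ => (hkey i).2
  rw [Finset.sum_add_distrib] at hsurr
  have hexp1 : ∑ i, (γEM i - γ i) * T2 Φ σ2 γ i
      = ∑ i, T2 Φ σ2 γ i * γEM i - ∑ i, γ i * T2 Φ σ2 γ i := by
    rw [← Finset.sum_sub_distrib]
    exact Finset.sum_congr rfl fun i _ => by ring
  have hexp2 : ∑ i, γ i * (T1 Φ σ2 y γ i + T2 Φ σ2 γ i)
      = ∑ i, γ i * T1 Φ σ2 y γ i + ∑ i, γ i * T2 Φ σ2 γ i := by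
    rw [← Finset.sum_add_distrib]
    exact Finset.sum_congr rfl fun i _ => by ring
  rw [hexp2] at hsurr
  linarith [hld, hsum', hsurr]
end

section
/- (Theorem 3: convex combination of update rules from different majorizers.) Let f : ℝ^M → ℝ, x₀ ∈ ℝ^M, and for q ∈ {1,…,Q} let g_q : ℝ^M → ℝ be convex with g_q(x) ≥ f(x) for all x and g_q(x₀) = f(x₀). Suppose the pointwise minimum x ↦ min_{q∈{1,…,Q}} g_q(x) is convex. For each q let x_{q,1},…,x_{q,S_q} ∈ ℝ^M satisfy g_q(x_{q,s}) ≤ g_q(x₀) for all s ∈ {1,…,S_q}, and let weights α_{q,s} ≥ 0 satisfy Σ_{q=1}^Q Σ_{s=1}^{S_q} α_{q,s} = 1 and Σ_{s=1}^{S_q} α_{q,s} > 0 for each q. Then f(Σ_{q=1}^Q Σ_{s=1}^{S_q} α_{q,s} x_{q,s}) ≤ f(x₀). -/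
/-!
The pointwise minimum `h` of the majorizers satisfies `f ≤ h`, and each update `x q s` lies in
the sublevel set `{h ≤ f x₀}` because `h ≤ g q` and `g q (x q s) ≤ g q x₀ = f x₀`. That sublevel set of the convex function `h` is
convex, so it contains the convex combination of all updates, where `f ≤ h ≤ f x₀`.
-/

open Finset

theorem Convex.sum_sum_mem {E ι : Type*} {κ : ι → Type*} [AddCommGroup E] [Module ℝ E]
    [Fintype ι] [∀ i, Fintype (κ i)] {s : Set E} (hs : Convex ℝ s)
    (w : ∀ i, κ i → ℝ) (z : ∀ i, κ i → E) (hw₀ : ∀ i j, 0 ≤ w i j)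
    (hw₁ : ∑ i, ∑ j, w i j = 1) (hz : ∀ i j, z i j ∈ s) :
    ∑ i, ∑ j, w i j • z i j ∈ s := by
  rw [← Fintype.sum_sigma'] at hw₁ ⊢
  exact hs.sum_mem (fun p _ => hw₀ p.1 p.2) hw₁ fun p _ => hz p.1 p.2

theorem stmt12_general {M Q : ℕ}
    (f : (Fin M → ℝ) → ℝ) (x₀ : Fin M → ℝ)
    (g : Fin Q → (Fin M → ℝ) → ℝ)
    (hmaj : ∀ q x, f x ≤ g q x) (htouch : ∀ q, g q x₀ = f x₀)
    (hminconv : ConvexOn ℝ Set.univ (fun x => ⨅ q, g q x))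
    (S : Fin Q → ℕ)
    (x : (q : Fin Q) → Fin (S q) → (Fin M → ℝ))
    (hdesc : ∀ q s, g q (x q s) ≤ g q x₀)
    (α : (q : Fin Q) → Fin (S q) → ℝ)
    (hα : ∀ q s, 0 ≤ α q s)
    (hsum : ∑ q, ∑ s, α q s = 1) :
    f (∑ q, ∑ s, α q s • x q s) ≤ f x₀ := by
  -- an empty `⨅` over `ℝ` is the junk value `0`; `hsum` rules out `Q = 0`
  have : Nonempty (Fin Q) :=
    univ_nonempty_iff.mp (nonempty_of_sum_ne_zero (hsum ▸ one_ne_zero))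
  have hupdate : ∀ q s, ⨅ q', g q' (x q s) ≤ f x₀ := fun q s =>
    calc ⨅ q', g q' (x q s) ≤ g q (x q s) := ciInf_le (Set.finite_range _).bddBelow q
      _ ≤ f x₀ := (hdesc q s).trans (htouch q).le
  have hcomb : ⨅ q, g q (∑ q, ∑ s, α q s • x q s) ≤ f x₀ :=
    ((hminconv.convex_le (f x₀)).sum_sum_mem α x hα hsum fun q s => ⟨trivial, hupdate q s⟩).2
  exact (le_ciInf fun q => hmaj q _).trans hcomb

/-- Theorem 3: convex combination of update rules from different
majorizers, assuming the pointwise minimum of the majorizers is convex. -/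
theorem stmt12 {M Q : ℕ} (hQ : 0 < Q)
    (f : (Fin M → ℝ) → ℝ) (x₀ : Fin M → ℝ)
    (g : Fin Q → (Fin M → ℝ) → ℝ)
    (hconv : ∀ q, ConvexOn ℝ Set.univ (g q))
    (hmaj : ∀ q x, f x ≤ g q x) (htouch : ∀ q, g q x₀ = f x₀)
    (hminconv : ConvexOn ℝ Set.univ (fun x => ⨅ q, g q x))
    (S : Fin Q → ℕ)
    (x : (q : Fin Q) → Fin (S q) → (Fin M → ℝ))
    (hdesc : ∀ q s, g q (x q s) ≤ g q x₀)
    (α : (q : Fin Q) → Fin (S q) → ℝ)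
    (hα : ∀ q s, 0 ≤ α q s)
    (hsum : ∑ q, ∑ s, α q s = 1)
    (hpos : ∀ q, 0 < ∑ s, α q s) :
    f (∑ q, ∑ s, α q s • x q s) ≤ f x₀ :=
  stmt12_general f x₀ g hmaj htouch hminconv S x hdesc α hα hsum
end

section
/- (Closed-form minimizer of the combined EM/p-SBL majorizer, per coordinate.) Let T₁ > 0, T₂ > 0, γ̂ > 0 be real numbers, let α₁, α₂ ≥ 0 with α₁ + α₂ = 1 and α₂ > 0, and set c = γ̂ + (T₁ − T₂)·γ̂² and assume c > 0. Define h : (0,∞) → ℝ by h(γ) = α₁·(1/2)·( log γ + c/γ ) + α₂·( T₂·γ + γ̂²·T₁/γ ). Then γ* = ( α₁·c + 2·α₂·γ̂²·T₁ ) / ( α₁/2 + √( α₁²/4 + 4·α₂·T₂·( α₁·c/2 + α₂·γ̂²·T₁ ) ) ) is strictly positive, is the unique positive root of the quadratic equation α₂·T₂·γ² + (α₁/2)·γ − ( α₁·c/2 + α₂·γ̂²·T₁ ) = 0, and is the unique minimizer of h on (0,∞). -/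
open Real

set_option maxHeartbeats 1000000 in
/-- closed-form minimizer of the combined EM/p-SBL majorizer,
per coordinate: γ* given by the stated formula is positive, is the unique
positive root of α₂T₂γ² + (α₁/2)γ − (α₁c/2 + α₂γ̂²T₁) = 0, and is the unique
minimizer of h(γ) = α₁(1/2)(log γ + c/γ) + α₂(T₂γ + γ̂²T₁/γ) on (0,∞). -/
theorem stmt14 (T₁ T₂ γhat α₁ α₂ c γstar : ℝ)
    (hT1 : 0 < T₁) (hT2 : 0 < T₂) (hγhat : 0 < γhat)
    (hα1 : 0 ≤ α₁) (hα2 : 0 ≤ α₂) (hsum : α₁ + α₂ = 1) (hα2pos : 0 < α₂)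
    (hc : c = γhat + (T₁ - T₂) * γhat ^ 2) (hcpos : 0 < c)
    (hγstar : γstar = (α₁ * c + 2 * α₂ * γhat ^ 2 * T₁) /
      (α₁ / 2 + Real.sqrt (α₁ ^ 2 / 4 + 4 * α₂ * T₂ * (α₁ * c / 2 + α₂ * γhat ^ 2 * T₁)))) :
    0 < γstar ∧
    (α₂ * T₂ * γstar ^ 2 + (α₁ / 2) * γstar - (α₁ * c / 2 + α₂ * γhat ^ 2 * T₁) = 0) ∧
    (∀ γ : ℝ, 0 < γ →
      α₂ * T₂ * γ ^ 2 + (α₁ / 2) * γ - (α₁ * c / 2 + α₂ * γhat ^ 2 * T₁) = 0 → γ = γstar) ∧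
    (∀ γ : ℝ, 0 < γ →
      α₁ * (1 / 2) * (Real.log γstar + c / γstar) + α₂ * (T₂ * γstar + γhat ^ 2 * T₁ / γstar) ≤
        α₁ * (1 / 2) * (Real.log γ + c / γ) + α₂ * (T₂ * γ + γhat ^ 2 * T₁ / γ)) ∧
    (∀ γ : ℝ, 0 < γ →
      α₁ * (1 / 2) * (Real.log γ + c / γ) + α₂ * (T₂ * γ + γhat ^ 2 * T₁ / γ) =
        α₁ * (1 / 2) * (Real.log γstar + c / γstar) + α₂ * (T₂ * γstar + γhat ^ 2 * T₁ / γstar) →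
      γ = γstar) := by
  have hA : 0 < α₂ * T₂ := mul_pos hα2pos hT2
  have hB : (0:ℝ) ≤ α₁ / 2 := by linarith
  have hC : 0 < α₁ * c / 2 + α₂ * γhat ^ 2 * T₁ := by
    have h1 : 0 ≤ α₁ * c / 2 := by positivity
    have h2 : 0 < α₂ * γhat ^ 2 * T₁ := by positivity
    linarith
  have hargpos : 0 < α₁ ^ 2 / 4 + 4 * α₂ * T₂ * (α₁ * c / 2 + α₂ * γhat ^ 2 * T₁) := by
    nlinarith [sq_nonneg α₁, mul_pos hA hC]
  set D := Real.sqrt (α₁ ^ 2 / 4 + 4 * α₂ * T₂ * (α₁ * c / 2 + α₂ * γhat ^ 2 * T₁)) with hDdef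
  have hD2 : D ^ 2 = α₁ ^ 2 / 4 + 4 * α₂ * T₂ * (α₁ * c / 2 + α₂ * γhat ^ 2 * T₁) := by
    rw [hDdef, Real.sq_sqrt hargpos.le]
  have hDpos : 0 < D := by
    rw [hDdef]; exact Real.sqrt_pos.mpr hargpos
  have hden : 0 < α₁ / 2 + D := by linarith
  have hγspos : 0 < γstar := by
    rw [hγstar]
    apply div_pos _ hden
    nlinarith [mul_pos (mul_pos hα2pos (pow_pos hγhat 2)) hT1, mul_nonneg hα1 hcpos.le]
  have h1 : (α₁ / 2 + D) * γstar = α₁ * c + 2 * α₂ * γhat ^ 2 * T₁ := by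
    rw [hγstar]; field_simp
  have h3 : (D * γstar) ^ 2 = (α₁ * c + 2 * α₂ * γhat ^ 2 * T₁ - α₁ / 2 * γstar) ^ 2 := by
    have h2 : D * γstar = α₁ * c + 2 * α₂ * γhat ^ 2 * T₁ - α₁ / 2 * γstar := by
      linarith [h1]
    rw [h2]
  have h4 : (α₁ * c / 2 + α₂ * γhat ^ 2 * T₁) *
      (α₂ * T₂ * γstar ^ 2 + (α₁ / 2) * γstar - (α₁ * c / 2 + α₂ * γhat ^ 2 * T₁)) * 4 = 0 := by
    linear_combination h3 - γstar ^ 2 * hD2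
  have hroot : α₂ * T₂ * γstar ^ 2 + (α₁ / 2) * γstar - (α₁ * c / 2 + α₂ * γhat ^ 2 * T₁) = 0 := by
    have h5 : (α₁ * c / 2 + α₂ * γhat ^ 2 * T₁) *
        (α₂ * T₂ * γstar ^ 2 + (α₁ / 2) * γstar - (α₁ * c / 2 + α₂ * γhat ^ 2 * T₁)) = 0 := by
      linarith [h4]
    rcases mul_eq_zero.mp h5 with h | h
    · exact absurd h (ne_of_gt hC)
    · exact h
  refine ⟨hγspos, hroot, ?_, ?_, ?_⟩
  · intro γ hγ hq
    have hfac : (γ - γstar) * (α₂ * T₂ * (γ + γstar) + α₁ / 2) = 0 := by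
      linear_combination hq - hroot
    have hpos : 0 < α₂ * T₂ * (γ + γstar) + α₁ / 2 := by nlinarith
    rcases mul_eq_zero.mp hfac with h | h
    · linarith
    · linarith
  all_goals
    have key : ∀ γ : ℝ, 0 < γ →
        (α₁ * (1 / 2) * (Real.log γstar + c / γstar) +
          α₂ * (T₂ * γstar + γhat ^ 2 * T₁ / γstar)) + α₂ * T₂ * (γ - γstar) ^ 2 / γ ≤
        α₁ * (1 / 2) * (Real.log γ + c / γ) + α₂ * (T₂ * γ + γhat ^ 2 * T₁ / γ) := by
      intro γ hγ
      have hL : 1 - γstar / γ ≤ Real.log γ - Real.log γstar := by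
        have h1 : Real.log (γstar / γ) ≤ γstar / γ - 1 :=
          Real.log_le_sub_one_of_pos (by positivity)
        rw [Real.log_div (ne_of_gt hγspos) (ne_of_gt hγ)] at h1
        linarith
      have hBL : α₁ / 2 * (1 - γstar / γ) ≤ α₁ / 2 * (Real.log γ - Real.log γstar) :=
        mul_le_mul_of_nonneg_left hL hB
      have hident : α₁ * (1 / 2) * (c / γ) + α₂ * (T₂ * γ + γhat ^ 2 * T₁ / γ) -
          (α₁ * (1 / 2) * (c / γstar) + α₂ * (T₂ * γstar + γhat ^ 2 * T₁ / γstar)) -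
          α₂ * T₂ * (γ - γstar) ^ 2 / γ = α₁ / 2 * (γstar / γ - 1) := by
        have hγne : γ ≠ 0 := ne_of_gt hγ
        have hγsne : γstar ≠ 0 := ne_of_gt hγspos
        field_simp
        linear_combination (2 * (γ - γstar)) * hroot
      linarith [hBL, hident]
  · intro γ hγ
    have h1 : 0 ≤ α₂ * T₂ * (γ - γstar) ^ 2 / γ := by positivity
    linarith [key γ hγ]
  · intro γ hγ heq
    have k := key γ hγ
    have h1 : α₂ * T₂ * (γ - γstar) ^ 2 / γ ≤ 0 := by linarith
    have h2 : 0 ≤ α₂ * T₂ * (γ - γstar) ^ 2 / γ := by positivity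
    have h3 : α₂ * T₂ * (γ - γstar) ^ 2 / γ = 0 := le_antisymm h1 h2
    have h4 : (γ - γstar) ^ 2 = 0 := by
      have hγne : γ ≠ 0 := ne_of_gt hγ
      rw [div_eq_zero_iff] at h3
      rcases h3 with h | h
      · rcases mul_eq_zero.mp h with h' | h'
        · exact absurd h' (ne_of_gt hA)
        · exact h'
      · exact absurd h hγne
    have h5 := pow_eq_zero_iff (n := 2) (by norm_num) |>.mp h4
    linarith [sub_eq_zero.mp h5]
end

section
/- (Reparameterization of Tipping's multiplicative update.) Let γ ∈ ℝ^M have strictly positive entries and suppose T₂(γ)[i] > 0 for every i. For l ∈ {1,…,L} define x̂_l = Γ Φᵀ Σ(γ)⁻¹ y_l and define Σ_e = Γ − Γ Φᵀ Σ(γ)⁻¹ Φ Γ. Then for every index i, γ[i] − (Σ_e)[i,i] = γ[i]²·T₂(γ)[i] > 0, and the multiplicative update satisfies [ (1/L)·Σ_{l=1}^L x̂_l[i]² / ( γ[i] − (Σ_e)[i,i] ) ]·γ[i] = ( T₁(γ)[i] / T₂(γ)[i] )·γ[i]. -/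
open Matrix Finset Real

/-- reparameterization of Tipping's multiplicative update: with
x̂_l = Γ Φᵀ Σ(γ)⁻¹ y_l and Σ_e = Γ − Γ Φᵀ Σ(γ)⁻¹ Φ Γ, for every i,
γ[i] − (Σ_e)[i,i] = γ[i]²T₂(γ)[i] > 0 and
[(1/L)Σ_l x̂_l[i]² / (γ[i] − (Σ_e)[i,i])]·γ[i] = (T₁(γ)[i]/T₂(γ)[i])·γ[i]. -/
theorem stmt16 {N M L : ℕ} (hL : 1 ≤ L) (Φ : Matrix (Fin N) (Fin M) ℝ) (σ2 : ℝ)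
    (hσ : 0 < σ2) (y : Fin L → Fin N → ℝ) (γ : Fin M → ℝ) (hγ : ∀ i, 0 < γ i)
    (hT2 : ∀ i, 0 < T2 Φ σ2 γ i)
    (xhat : Fin L → Fin M → ℝ)
    (hx : ∀ l, xhat l = (Matrix.diagonal γ * Φᵀ * (Sig Φ σ2 γ)⁻¹) *ᵥ y l)
    (Se : Matrix (Fin M) (Fin M) ℝ)
    (hSe : Se = Matrix.diagonal γ -
      Matrix.diagonal γ * Φᵀ * (Sig Φ σ2 γ)⁻¹ * Φ * Matrix.diagonal γ) (i : Fin M) :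
    γ i - Se i i = (γ i) ^ 2 * T2 Φ σ2 γ i ∧
    0 < (γ i) ^ 2 * T2 Φ σ2 γ i ∧
    ((1 / (L : ℝ)) * (∑ l, (xhat l i) ^ 2) / (γ i - Se i i)) * γ i =
      (T1 Φ σ2 y γ i / T2 Φ σ2 γ i) * γ i := by
  set A := (Sig Φ σ2 γ)⁻¹ with hA
  have hxi : ∀ l, xhat l i = γ i * ((fun n => Φ n i) ⬝ᵥ A *ᵥ y l) := by
    intro l
    rw [hx l]
    simp [Matrix.mulVec, Matrix.mul_apply, dotProduct, Matrix.diagonal,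
      Finset.mul_sum, Finset.sum_mul]
    rw [Finset.sum_comm]
    congr 1; ext n
    congr 1; ext m
    ring
  have hSii : Se i i = γ i - γ i ^ 2 * T2 Φ σ2 γ i := by
    rw [hSe]
    simp [Matrix.sub_apply, Matrix.diagonal_apply_eq, T2, Matrix.mul_apply,
      Matrix.mulVec, dotProduct, Matrix.diagonal, Finset.mul_sum, Finset.sum_mul]
    rw [Finset.sum_comm]
    congr 1
    ext n
    congr 1
    ext m
    ring
  have h1 : γ i - Se i i = (γ i) ^ 2 * T2 Φ σ2 γ i := by rw [hSii]; ring
  refine ⟨h1, mul_pos (pow_pos (hγ i) 2) (hT2 i), ?_⟩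
  rw [h1]
  have hγi := (hγ i).ne'
  have hT2i := (hT2 i).ne'
  simp only [hxi, mul_pow, ← Finset.mul_sum]
  have hT1 : T1 Φ σ2 y γ i = 1 / (L : ℝ) * ∑ l, ((fun n => Φ n i) ⬝ᵥ A *ᵥ y l) ^ 2 := by
    simp only [T1, ← hA]
  rw [hT1]
  set s := ∑ l, ((fun n => Φ n i) ⬝ᵥ A *ᵥ y l) ^ 2
  set t := T2 Φ σ2 γ i
  field_simp
end
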